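/- For every prime p ≥ 5 and all integers i ≥ 1, k ≥ 2, p^{3i} divides C(k·p^i − 1, p^i − 1) − C(k·p^{i−1} − 1, p^{i−1} − 1). -/

import Mathlib

open Finset

-- inverse uniqueness in ZMod
lemma zmod_inv_eq {n : ℕ} {y z : ZMod n} (hy : IsUnit y) (h : y * z = 1) : y⁻¹ = z := by
  calc y⁻¹ = y⁻¹ * (y * z) := by rw [h, mul_one]
  _ = (y⁻¹ * y) * z := by ring
  _ = z := by rw [ZMod.inv_mul_of_unit y hy, one_mul]

lemma zmod_isUnit_inv {n : ℕ} {y : ZMod n} (hy : IsUnit y) : IsUnit y⁻¹ :=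
  IsUnit.of_mul_eq_one _ (ZMod.inv_mul_of_unit y hy)

lemma zmod_inv_inv {n : ℕ} {y : ZMod n} (hy : IsUnit y) : y⁻¹⁻¹ = y :=
  zmod_inv_eq (zmod_isUnit_inv hy) (ZMod.inv_mul_of_unit y hy)

-- ring hom maps inverses of units
lemma map_zmod_inv {n m : ℕ} (f : ZMod n →+* ZMod m) {x : ZMod n} (hx : IsUnit x) :
    f x⁻¹ = (f x)⁻¹ := by
  refine (zmod_inv_eq (hx.map f) ?_).symm
  rw [← map_mul, ZMod.mul_inv_of_unit x hx, map_one]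

-- transfer: if x vanishes in ZMod b and a*b = N then (a : ZMod N) * x = 0
lemma transfer {N b : ℕ} [NeZero N] (hb : b ∣ N) (a : ℕ) (hab : a * b = N) (x : ZMod N)
    (h : ZMod.castHom hb (ZMod b) x = 0) : (a : ZMod N) * x = 0 := by
  have hxv : ((x.val : ℕ) : ZMod b) = 0 := by
    rw [ZMod.natCast_val, ← ZMod.castHom_apply (h := hb), h]
  rw [ZMod.natCast_eq_zero_iff] at hxv
  obtain ⟨c, hc⟩ := hxv
  have : x = ((x.val : ℕ) : ZMod N) := (ZMod.natCast_rightInverse x).symm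
  rw [this, hc, ← Nat.cast_mul, ← mul_assoc, hab, Nat.cast_mul, ZMod.natCast_self, zero_mul]

section USums
variable {N : ℕ} [NeZero N]

/-- reindex sum over units by multiplication by a unit -/
lemma sum_units_mul (g : ZMod N) (hg : IsUnit g) (f : ZMod N → ZMod N) :
    ∑ x ∈ univ.filter (fun x : ZMod N => IsUnit x), f x
      = ∑ x ∈ univ.filter (fun x : ZMod N => IsUnit x), f (g * x) := by
  refine Finset.sum_nbij' (fun x => g⁻¹ * x) (fun x => g * x) ?_ ?_ ?_ ?_ ?_
  · intro x hx; simp only [mem_filter, mem_univ, true_and] at hx ⊢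
    exact (zmod_isUnit_inv hg).mul hx
  · intro x hx; simp only [mem_filter, mem_univ, true_and] at hx ⊢
    exact hg.mul hx
  · intro x _; show g * (g⁻¹ * x) = x
    rw [← mul_assoc, ZMod.mul_inv_of_unit g hg, one_mul]
  · intro x _; show g⁻¹ * (g * x) = x
    rw [← mul_assoc, ZMod.inv_mul_of_unit g hg, one_mul]
  · intro x _; show f x = f (g * (g⁻¹ * x))
    rw [← mul_assoc, ZMod.mul_inv_of_unit g hg, one_mul]

lemma sum_units_inv_reindex (f : ZMod N → ZMod N) :
    ∑ x ∈ univ.filter (fun x : ZMod N => IsUnit x), f x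
      = ∑ x ∈ univ.filter (fun x : ZMod N => IsUnit x), f x⁻¹ := by
  refine Finset.sum_nbij' (fun x => x⁻¹) (fun x => x⁻¹) ?_ ?_ ?_ ?_ ?_
  · intro x hx; simp only [mem_filter, mem_univ, true_and] at hx ⊢
    exact zmod_isUnit_inv hx
  · intro x hx; simp only [mem_filter, mem_univ, true_and] at hx ⊢
    exact zmod_isUnit_inv hx
  · intro x hx; simp only [mem_filter, mem_univ, true_and] at hx
    exact zmod_inv_inv hx
  · intro x hx; simp only [mem_filter, mem_univ, true_and] at hx
    exact zmod_inv_inv hx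
  · intro x hx; simp only [mem_filter, mem_univ, true_and] at hx
    show f x = f x⁻¹⁻¹
    rw [zmod_inv_inv hx]

lemma sum_units_eq_zero (h2 : IsUnit (2 : ZMod N)) :
    ∑ x ∈ univ.filter (fun x : ZMod N => IsUnit x), x = 0 := by
  have := sum_units_mul (2 : ZMod N) h2 id
  simp only [id] at this
  have h : (2 - 1) * ∑ x ∈ univ.filter (fun x : ZMod N => IsUnit x), x = 0 := by
    rw [sub_mul, one_mul, sub_eq_zero]
    rw [Finset.mul_sum]; exact this.symm
  rwa [show (2 - 1 : ZMod N) = 1 by norm_num, one_mul] at h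

lemma sum_units_sq_eq_zero (h2 : IsUnit (2 : ZMod N)) (h3 : IsUnit (3 : ZMod N)) :
    ∑ x ∈ univ.filter (fun x : ZMod N => IsUnit x), x ^ 2 = 0 := by
  have := sum_units_mul (2 : ZMod N) h2 (fun x => x ^ 2)
  have h : (3 : ZMod N) * ∑ x ∈ univ.filter (fun x : ZMod N => IsUnit x), x ^ 2 = 0 := by
    have : (4 - 1 : ZMod N) * ∑ x ∈ univ.filter (fun x : ZMod N => IsUnit x), x ^ 2 = 0 := by
      rw [sub_mul, one_mul, sub_eq_zero, Finset.mul_sum]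
      rw [this]; congr 1; ext x; ring
    convert this using 2; norm_num
  have := congrArg (fun z => (3 : ZMod N)⁻¹ * z) h
  simpa [← mul_assoc, ZMod.inv_mul_of_unit 3 h3] using this

lemma sum_units_inv_eq_zero (h2 : IsUnit (2 : ZMod N)) :
    ∑ x ∈ univ.filter (fun x : ZMod N => IsUnit x), x⁻¹ = 0 := by
  rw [← sum_units_inv_reindex (fun x => x)]; exact sum_units_eq_zero h2

lemma sum_units_inv_sq_eq_zero (h2 : IsUnit (2 : ZMod N)) (h3 : IsUnit (3 : ZMod N)) :
    ∑ x ∈ univ.filter (fun x : ZMod N => IsUnit x), (x⁻¹) ^ 2 = 0 := by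
  rw [← sum_units_inv_reindex (fun x => x ^ 2)]; exact sum_units_sq_eq_zero h2 h3

end USums

section SBij
variable {p e : ℕ}

lemma coprime_of_not_dvd (hp : p.Prime) {j : ℕ} (hj : ¬ p ∣ j) : Nat.Coprime j (p ^ e) :=
  Nat.Coprime.pow_right e (Nat.coprime_comm.mp ((Nat.Prime.coprime_iff_not_dvd hp).mpr hj))

lemma unit_of_mem_S (hp : p.Prime) {j : ℕ} (hj : ¬ p ∣ j) : IsUnit ((j : ZMod (p ^ e))) :=
  (ZMod.isUnit_iff_coprime j (p ^ e)).mpr (coprime_of_not_dvd hp hj)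

lemma sum_S [NeZero (p ^ e)] (hp : p.Prime) (he : 1 ≤ e) {M : Type*} [AddCommMonoid M] (g : ZMod (p ^ e) → M) :
    ∑ j ∈ (Finset.Ico 1 (p ^ e)).filter (fun j => ¬ p ∣ j), g ((j : ZMod (p ^ e)))
      = ∑ x ∈ Finset.univ.filter (fun x : ZMod (p ^ e) => IsUnit x), g x := by
  haveI : Fact (1 < p ^ e) := ⟨Nat.one_lt_pow (by omega) hp.one_lt⟩
  refine Finset.sum_nbij' (fun j => ((j : ZMod (p ^ e)))) (fun x => x.val) ?_ ?_ ?_ ?_ ?_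
  · intro j hj
    simp only [mem_filter, mem_Ico, mem_univ, true_and] at hj ⊢
    exact unit_of_mem_S hp hj.2
  · intro x hx
    simp only [mem_filter, mem_univ, true_and, mem_Ico] at hx ⊢
    have hvx : ((x.val : ℕ) : ZMod (p ^ e)) = x := ZMod.natCast_rightInverse x
    refine ⟨⟨?_, ZMod.val_lt x⟩, ?_⟩
    · rcases Nat.eq_zero_or_pos x.val with h0 | h1
      · exfalso
        rw [← hvx, h0] at hx
        simp only [Nat.cast_zero] at hx
        exact hx.ne_zero rfl
      · exact h1
    · intro hdvd
      have hu : IsUnit ((x.val : ℕ) : ZMod (p ^ e)) := by rw [hvx]; exact hx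
      have hco := (ZMod.isUnit_iff_coprime _ _).mp hu
      have : p ∣ Nat.gcd x.val (p ^ e) := Nat.dvd_gcd hdvd (dvd_pow_self p (by omega))
      rw [hco] at this
      exact hp.one_lt.ne' (Nat.dvd_one.mp this)
  · intro j hj
    simp only [mem_filter, mem_Ico] at hj
    exact ZMod.val_cast_of_lt hj.1.2
  · intro x _
    exact ZMod.natCast_rightInverse x
  · intro j _
    rfl

end SBij

lemma prod_nilp {R : Type*} [CommRing R] (t : R) (ht : t ^ 3 = 0) (s : Finset ℕ) (v : ℕ → R) :
    ∃ E : R, (∏ j ∈ s, (1 + t * v j)) = 1 + t * (∑ j ∈ s, v j) + t ^ 2 * E ∧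
      2 * E = (∑ j ∈ s, v j) ^ 2 - ∑ j ∈ s, (v j) ^ 2 := by
  classical
  induction s using Finset.induction_on with
  | empty => exact ⟨0, by simp, by simp⟩
  | insert _ _ ha ih =>
    obtain ⟨E, hP, hE⟩ := ih
    rename_i a s
    refine ⟨E + v a * ∑ j ∈ s, v j, ?_, ?_⟩
    · rw [Finset.prod_insert ha, hP, Finset.sum_insert ha]
      linear_combination (v a * E) * ht
    · rw [Finset.sum_insert ha, Finset.sum_insert ha]
      linear_combination hE

lemma descProd (q k : ℕ) (hq : 1 ≤ q) (hk : 1 ≤ k) :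
    Nat.factorial (q - 1) * Nat.choose (k * q - 1) (q - 1) = ∏ j ∈ Finset.Ico 1 q, ((k - 1) * q + j) := by
  rw [← Nat.descFactorial_eq_factorial_mul_choose, Nat.descFactorial_eq_prod_range]
  have hqk : q ≤ k * q := Nat.le_mul_of_pos_left q (by omega)
  have hsub : (k - 1) * q = k * q - q := by rw [Nat.sub_mul, one_mul]
  refine Finset.prod_nbij' (fun t => q - 1 - t) (fun j => q - 1 - j) ?_ ?_ ?_ ?_ ?_
  · intro t ht; simp only [mem_range, mem_Ico] at ht ⊢; omega
  · intro j hj; simp only [mem_range, mem_Ico] at hj ⊢; omega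
  · intro t ht; simp only [mem_range] at ht; omega
  · intro j hj; simp only [mem_Ico] at hj; omega
  · intro t ht; simp only [mem_range] at ht
    rw [hsub]
    omega

lemma splitProd (p m : ℕ) (hp : 2 ≤ p) (hm : 1 ≤ m) (f : ℕ → ℕ) :
    ∏ j ∈ Finset.Ico 1 (p * m), f j =
      ((∏ j ∈ (Finset.Ico 1 (p * m)).filter (fun j => ¬ p ∣ j), f j)) *
        ∏ j ∈ Finset.Ico 1 m, f (p * j) := by
  classical
  rw [← Finset.prod_filter_mul_prod_filter_not (Finset.Ico 1 (p * m)) (fun j => p ∣ j) f,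
    mul_comm]
  congr 1
  refine Finset.prod_nbij' (fun j => j / p) (fun j => p * j) ?_ ?_ ?_ ?_ ?_
  · intro j hj
    simp only [mem_filter, mem_Ico] at hj ⊢
    obtain ⟨⟨h1, h2⟩, c, rfl⟩ := hj
    rw [Nat.mul_div_cancel_left c (by omega)]
    refine ⟨Nat.pos_of_ne_zero fun h0 => by subst h0; simp at h1, Nat.lt_of_mul_lt_mul_left h2⟩
  · intro j hj
    simp only [mem_filter, mem_Ico] at hj ⊢
    refine ⟨⟨Nat.mul_pos (by omega) (by omega), (Nat.mul_lt_mul_left (by omega : 0 < p)).mpr hj.2⟩, Dvd.intro j rfl⟩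
  · intro j hj
    simp only [mem_filter, mem_Ico] at hj
    exact Nat.mul_div_cancel' hj.2
  · intro j hj
    simp only [mem_Ico] at hj
    exact Nat.mul_div_cancel_left j (by omega)
  · intro j hj
    simp only [mem_filter, mem_Ico] at hj
    rw [Nat.mul_div_cancel' hj.2]

lemma key_nat (p k i : ℕ) (hp : 2 ≤ p) (hk : 1 ≤ k) (hi : 1 ≤ i) :
    Nat.choose (k * p ^ i - 1) (p ^ i - 1) *
        (∏ j ∈ (Finset.Ico 1 (p ^ i)).filter (fun j => ¬ p ∣ j), j) =
      (∏ j ∈ (Finset.Ico 1 (p ^ i)).filter (fun j => ¬ p ∣ j), ((k - 1) * p ^ i + j)) *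
        Nat.choose (k * p ^ (i - 1) - 1) (p ^ (i - 1) - 1) := by
  classical
  set n := p ^ i with hn
  set m := p ^ (i - 1) with hm
  have hnm : n = p * m := by
    rw [hn, hm, ← pow_succ']
    congr 1
    omega
  have hm1 : 1 ≤ m := Nat.one_le_pow _ _ (by omega)
  have hn1 : 1 ≤ n := Nat.one_le_pow _ _ (by omega)
  have E1 : Nat.factorial (n - 1) * Nat.choose (k * n - 1) (n - 1)
      = ∏ j ∈ Finset.Ico 1 n, ((k - 1) * n + j) := descProd n k hn1 hk
  have E3 : Nat.factorial (m - 1) * Nat.choose (k * m - 1) (m - 1)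
      = ∏ j ∈ Finset.Ico 1 m, ((k - 1) * m + j) := descProd m k hm1 hk
  have Esplit : ∏ j ∈ Finset.Ico 1 n, ((k - 1) * n + j)
      = (∏ j ∈ (Finset.Ico 1 n).filter (fun j => ¬ p ∣ j), ((k - 1) * n + j)) *
          ∏ j ∈ Finset.Ico 1 m, ((k - 1) * n + p * j) := by
    rw [hnm]
    exact splitProd p m hp hm1 _
  have Einner : ∏ j ∈ Finset.Ico 1 m, ((k - 1) * n + p * j)
      = p ^ (m - 1) * ∏ j ∈ Finset.Ico 1 m, ((k - 1) * m + j) := by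
    rw [Finset.prod_congr rfl (fun j _ => show (k - 1) * n + p * j = p * ((k - 1) * m + j) by
      rw [hnm]; ring), Finset.prod_mul_distrib, Finset.prod_const, Nat.card_Ico]
  have E2 : Nat.factorial (n - 1)
      = (∏ j ∈ (Finset.Ico 1 n).filter (fun j => ¬ p ∣ j), j) *
          (p ^ (m - 1) * Nat.factorial (m - 1)) := by
    have h1 : ∏ j ∈ Finset.Ico 1 n, j = Nat.factorial (n - 1) := by
      rw [show n = (n - 1) + 1 by omega]
      exact Finset.prod_Ico_id_eq_factorial (n - 1)
    have h2 : ∏ j ∈ Finset.Ico 1 m, j = Nat.factorial (m - 1) := by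
      rw [show m = (m - 1) + 1 by omega]
      exact Finset.prod_Ico_id_eq_factorial (m - 1)
    have := splitProd p m hp hm1 (fun j => j)
    rw [← hnm] at this
    rw [← h1, this]
    have h3 : ∏ j ∈ Finset.Ico 1 m, p * j
        = p ^ (m - 1) * ∏ j ∈ Finset.Ico 1 m, j := by
      rw [Finset.prod_mul_distrib, Finset.prod_const, Nat.card_Ico]
    rw [h3, h2]
  have hC : 0 < p ^ (m - 1) * Nat.factorial (m - 1) :=
    Nat.mul_pos (Nat.pow_pos (by omega)) (Nat.factorial_pos _)
  refine Nat.eq_of_mul_eq_mul_right hC ?_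
  calc Nat.choose (k * n - 1) (n - 1) *
        (∏ j ∈ (Finset.Ico 1 n).filter (fun j => ¬ p ∣ j), j) *
        (p ^ (m - 1) * Nat.factorial (m - 1))
      = Nat.factorial (n - 1) * Nat.choose (k * n - 1) (n - 1) := by rw [E2]; ring
    _ = (∏ j ∈ (Finset.Ico 1 n).filter (fun j => ¬ p ∣ j), ((k - 1) * n + j)) *
          (p ^ (m - 1) * (Nat.factorial (m - 1) * Nat.choose (k * m - 1) (m - 1))) := by
        rw [E1, Esplit, Einner, E3]; try ring
    _ = (∏ j ∈ (Finset.Ico 1 n).filter (fun j => ¬ p ∣ j), ((k - 1) * n + j)) *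
          Nat.choose (k * m - 1) (m - 1) * (p ^ (m - 1) * Nat.factorial (m - 1)) := by ring

lemma cancel_unit {n : ℕ} {c x : ZMod n} (hc : IsUnit c) (h : c * x = 0) : x = 0 := by
  have h1 := congrArg (fun z => c⁻¹ * z) h
  simpa [← mul_assoc, ZMod.inv_mul_of_unit c hc] using h1

lemma unit_small (p e c : ℕ) (hp : p.Prime) (h5 : 5 ≤ p) (hc : 1 ≤ c) (hc4 : c < 5) :
    IsUnit ((c : ℕ) : ZMod (p ^ e)) :=
  unit_of_mem_S hp (fun hd => by have := Nat.le_of_dvd (by omega) hd; omega)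

lemma sum_S_inv_zero (p i : ℕ) (hp : p.Prime) (h5 : 5 ≤ p) (hi : 1 ≤ i) :
    ∑ j ∈ (Finset.Ico 1 (p ^ i)).filter (fun j => ¬ p ∣ j), ((j : ZMod (p ^ i)))⁻¹ = 0 := by
  haveI : NeZero (p ^ i) := ⟨pow_ne_zero i (by omega)⟩
  rw [sum_S hp hi (fun x => x⁻¹)]
  refine sum_units_inv_eq_zero ?_
  have := unit_small p i 2 hp h5 (by omega) (by omega)
  simpa using this

lemma sum_S_inv_sq_zero (p i : ℕ) (hp : p.Prime) (h5 : 5 ≤ p) (hi : 1 ≤ i) :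
    ∑ j ∈ (Finset.Ico 1 (p ^ i)).filter (fun j => ¬ p ∣ j), (((j : ZMod (p ^ i)))⁻¹) ^ 2 = 0 := by
  haveI : NeZero (p ^ i) := ⟨pow_ne_zero i (by omega)⟩
  rw [sum_S hp hi (fun x => (x⁻¹) ^ 2)]
  refine sum_units_inv_sq_eq_zero ?_ ?_
  · have := unit_small p i 2 hp h5 (by omega) (by omega); simpa using this
  · have := unit_small p i 3 hp h5 (by omega) (by omega); simpa using this

lemma wolst (p i : ℕ) (hp : p.Prime) (h5 : 5 ≤ p) (hi : 1 ≤ i) :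
    ∑ j ∈ (Finset.Ico 1 (p ^ i)).filter (fun j => ¬ p ∣ j), ((j : ZMod (p ^ (2 * i))))⁻¹ = 0 := by
  classical
  set n := p ^ i with hn
  set N := p ^ (2 * i) with hN
  haveI : NeZero n := ⟨pow_ne_zero i (by omega)⟩
  haveI : NeZero N := ⟨pow_ne_zero _ (by omega)⟩
  have hpn : p ∣ n := dvd_pow_self p (by omega)
  have hn2 : ((n : ZMod N)) ^ 2 = 0 := by
    rw [← Nat.cast_pow, hn, ← pow_mul, show i * 2 = 2 * i from by ring, ← hN, ZMod.natCast_self]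
  have hSmem : ∀ j ∈ (Finset.Ico 1 n).filter (fun j => ¬ p ∣ j),
      (n - j) ∈ (Finset.Ico 1 n).filter (fun j => ¬ p ∣ j) := by
    intro j hj
    simp only [mem_filter, mem_Ico] at hj ⊢
    refine ⟨⟨by omega, by omega⟩, fun h => hj.2 ?_⟩
    have := Nat.dvd_sub hpn h
    rwa [Nat.sub_sub_self (by omega)] at this
  have hre : ∑ j ∈ (Finset.Ico 1 n).filter (fun j => ¬ p ∣ j), ((j : ZMod N))⁻¹
      = ∑ j ∈ (Finset.Ico 1 n).filter (fun j => ¬ p ∣ j), (((n - j : ℕ) : ZMod N))⁻¹ := by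
    refine Finset.sum_nbij' (fun j => n - j) (fun j => n - j) hSmem hSmem ?_ ?_ ?_
    · intro j hj; simp only [mem_filter, mem_Ico] at hj; omega
    · intro j hj; simp only [mem_filter, mem_Ico] at hj; omega
    · intro j hj; simp only [mem_filter, mem_Ico] at hj
      rw [Nat.sub_sub_self (by omega : j ≤ n)]
  have hpt : ∀ j ∈ (Finset.Ico 1 n).filter (fun j => ¬ p ∣ j),
      (((n - j : ℕ) : ZMod N))⁻¹
        = -(((j : ZMod N))⁻¹ + (n : ZMod N) * (((j : ZMod N))⁻¹) ^ 2) := by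
    intro j hj
    have hj' := hj
    simp only [mem_filter, mem_Ico] at hj'
    have hy : IsUnit (((n - j : ℕ) : ZMod N)) :=
      unit_of_mem_S hp (by simpa using (Finset.mem_filter.mp (hSmem j hj)).2)
    have hxu : IsUnit ((j : ZMod N)) := unit_of_mem_S hp hj'.2
    have hx : (j : ZMod N) * ((j : ZMod N))⁻¹ = 1 := ZMod.mul_inv_of_unit _ hxu
    refine zmod_inv_eq hy ?_
    rw [Nat.cast_sub (by omega : j ≤ n)]
    set x := (j : ZMod N)
    linear_combination (1 + (n : ZMod N) * x⁻¹) * hx - x⁻¹ ^ 2 * hn2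
  have hT : (n : ZMod N) *
      (∑ j ∈ (Finset.Ico 1 n).filter (fun j => ¬ p ∣ j), (((j : ZMod N))⁻¹) ^ 2) = 0 := by
    have hdvd : n ∣ N := by rw [hn, hN]; exact pow_dvd_pow p (by omega)
    refine transfer hdvd n (by rw [hn, hN, ← pow_add]; congr 1; omega) _ ?_
    rw [map_sum]
    have : ∀ j ∈ (Finset.Ico 1 n).filter (fun j => ¬ p ∣ j),
        (ZMod.castHom hdvd (ZMod n)) ((((j : ZMod N))⁻¹) ^ 2) = (((j : ZMod n))⁻¹) ^ 2 := by
      intro j hj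
      simp only [mem_filter, mem_Ico] at hj
      rw [map_pow, map_zmod_inv _ (unit_of_mem_S hp hj.2), map_natCast]
    rw [Finset.sum_congr rfl this, hn]
    exact sum_S_inv_sq_zero p i hp h5 hi
  have h2 : (2 : ZMod N) * ∑ j ∈ (Finset.Ico 1 n).filter (fun j => ¬ p ∣ j), ((j : ZMod N))⁻¹
      = 0 := by
    have e1 : ∑ j ∈ (Finset.Ico 1 n).filter (fun j => ¬ p ∣ j),
        (-(((j : ZMod N))⁻¹ + (n : ZMod N) * (((j : ZMod N))⁻¹) ^ 2))
        = -(∑ j ∈ (Finset.Ico 1 n).filter (fun j => ¬ p ∣ j), ((j : ZMod N))⁻¹)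
          - (n : ZMod N) * ∑ j ∈ (Finset.Ico 1 n).filter (fun j => ¬ p ∣ j),
              (((j : ZMod N))⁻¹) ^ 2 := by
      simp only [neg_add, Finset.sum_add_distrib, Finset.sum_neg_distrib, ← Finset.mul_sum,
        sub_eq_add_neg]
    have heq := hre
    rw [Finset.sum_congr rfl hpt, e1] at heq
    linear_combination heq - hT
  have h2u : IsUnit (2 : ZMod N) := by
    have := unit_small p (2 * i) 2 hp h5 (by omega) (by omega); rw [← hN] at this; simpa using this
  exact cancel_unit h2u h2

theorem jacobsthal (p : ℕ) (hp : p.Prime) (h5 : 5 ≤ p) (i k : ℕ) (hi : 1 ≤ i) (hk : 2 ≤ k) :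
    (p : ℤ) ^ (3 * i) ∣
      (Nat.choose (k * p ^ i - 1) (p ^ i - 1) : ℤ) -
        (Nat.choose (k * p ^ (i - 1) - 1) (p ^ (i - 1) - 1) : ℤ) := by
  classical
  set n := p ^ i with hn
  set R := ZMod (p ^ (3 * i)) with hR
  haveI : NeZero (p ^ (3 * i)) := ⟨pow_ne_zero _ (by omega)⟩
  haveI : NeZero (p ^ i) := ⟨pow_ne_zero _ (by omega)⟩
  set S := (Finset.Ico 1 n).filter (fun j => ¬ p ∣ j) with hS
  set t : R := ((k - 1 : ℕ) : R) * ((n : ℕ) : R) with htdef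
  have hunit : ∀ j ∈ S, IsUnit ((j : R)) := by
    intro j hj
    simp only [hS, mem_filter, mem_Ico] at hj
    exact unit_of_mem_S hp hj.2
  -- cast the key identity
  have hkey := key_nat p k i (by omega) (by omega) hi
  have hcast : ((Nat.choose (k * n - 1) (n - 1) : ℕ) : R) * (∏ j ∈ S, (j : R))
      = (∏ j ∈ S, (((k - 1) * n + j : ℕ) : R)) *
          ((Nat.choose (k * p ^ (i - 1) - 1) (p ^ (i - 1) - 1) : ℕ) : R) := by
    have h0 := congrArg (Nat.cast : ℕ → R) hkey
    rw [Nat.cast_mul, Nat.cast_mul, Nat.cast_prod, Nat.cast_prod] at h0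
    exact h0
  -- rewrite A as B * P
  have hfact : ∀ j ∈ S, (((k - 1) * n + j : ℕ) : R) = (j : R) * (1 + t * ((j : R))⁻¹) := by
    intro j hj
    have hx : (j : R) * ((j : R))⁻¹ = 1 := ZMod.mul_inv_of_unit _ (hunit j hj)
    push_cast
    rw [htdef]
    push_cast
    have hc : (((k - 1) * n : ℕ) : R) = ((k - 1 : ℕ) : R) * ((n : ℕ) : R) := Nat.cast_mul (α := R) _ _
    linear_combination (-(((k - 1 : ℕ) : R) * ((n : ℕ) : R))) * hx + hc
  have hA : (∏ j ∈ S, (((k - 1) * n + j : ℕ) : R))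
      = (∏ j ∈ S, (j : R)) * ∏ j ∈ S, (1 + t * ((j : R))⁻¹) := by
    rw [Finset.prod_congr rfl hfact, Finset.prod_mul_distrib]
  -- nilpotency
  have hn3 : ((n : ℕ) : R) ^ 3 = 0 := by
    rw [← Nat.cast_pow, hn, ← pow_mul, show i * 3 = 3 * i from by ring, ZMod.natCast_self]
  have ht3 : t ^ 3 = 0 := by rw [htdef, mul_pow, hn3, mul_zero]
  obtain ⟨E, hP, hE⟩ := prod_nilp t ht3 S (fun j => ((j : R))⁻¹)
  -- first-order term vanishes
  have hdvd2 : p ^ (2 * i) ∣ p ^ (3 * i) := pow_dvd_pow p (by omega)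
  have hSv : ((n : ℕ) : R) * (∑ j ∈ S, ((j : R))⁻¹) = 0 := by
    refine transfer hdvd2 n (by rw [hn, ← pow_add]; congr 1; omega) _ ?_
    rw [map_sum]
    have : ∀ j ∈ S, (ZMod.castHom hdvd2 (ZMod (p ^ (2 * i)))) (((j : R))⁻¹)
        = ((j : ZMod (p ^ (2 * i))))⁻¹ := by
      intro j hj
      rw [map_zmod_inv _ (hunit j hj), map_natCast]
    rw [Finset.sum_congr rfl this]
    exact wolst p i hp h5 hi
  -- second-order term vanishes
  have hdvd1 : p ^ i ∣ p ^ (3 * i) := pow_dvd_pow p (by omega)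
  have hE0 : ((p ^ (2 * i) : ℕ) : R) * E = 0 := by
    refine transfer hdvd1 (p ^ (2 * i)) (by rw [← pow_add]; congr 1; omega) _ ?_
    set π := ZMod.castHom hdvd1 (ZMod (p ^ i))
    have hmap : ∀ j ∈ S, π (((j : R))⁻¹) = ((j : ZMod (p ^ i)))⁻¹ := by
      intro j hj
      rw [map_zmod_inv _ (hunit j hj), map_natCast]
    have hπE := congrArg π hE
    rw [map_mul, map_sub, map_pow, map_sum, map_sum] at hπE
    rw [Finset.sum_congr rfl hmap] at hπE
    have hmap2 : ∀ j ∈ S, π ((((j : R))⁻¹) ^ 2) = (((j : ZMod (p ^ i)))⁻¹) ^ 2 := by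
      intro j hj
      rw [map_pow, hmap j hj]
    rw [Finset.sum_congr rfl hmap2] at hπE
    rw [hS, hn] at hπE
    rw [sum_S_inv_zero p i hp h5 hi, sum_S_inv_sq_zero p i hp h5 hi] at hπE
    have h2u : IsUnit (2 : ZMod (p ^ i)) := by
      have := unit_small p i 2 hp h5 (by omega) (by omega); simpa using this
    refine cancel_unit h2u ?_
    have : π 2 = 2 := by rw [map_ofNat]
    rw [← this, hπE]
    ring
  -- P = 1
  have hP1 : (∏ j ∈ S, (1 + t * ((j : R))⁻¹)) = 1 := by
    rw [hP]
    have e1 : t * (∑ j ∈ S, ((j : R))⁻¹) = 0 := by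
      rw [htdef, mul_assoc, hSv, mul_zero]
    have e2 : t ^ 2 * E = 0 := by
      have hn2 : (n : ℕ) ^ 2 = p ^ (2 * i) := by rw [hn, ← pow_mul]; congr 1; omega
      rw [htdef, mul_pow, mul_assoc,
        show (((n : ℕ) : R)) ^ 2 = ((p ^ (2 * i) : ℕ) : R) by rw [← Nat.cast_pow, hn2],
        hE0, mul_zero]
    rw [e1, e2, add_zero, add_zero]
  -- conclude equality in R
  have hBinv : (∏ j ∈ S, (j : R)) * (∏ j ∈ S, ((j : R))⁻¹) = 1 := by
    rw [← Finset.prod_mul_distrib]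
    rw [Finset.prod_congr rfl (fun j hj => ZMod.mul_inv_of_unit _ (hunit j hj))]
    exact Finset.prod_const_one
  have hfin : ((Nat.choose (k * n - 1) (n - 1) : ℕ) : R)
      = ((Nat.choose (k * p ^ (i - 1) - 1) (p ^ (i - 1) - 1) : ℕ) : R) := by
    have h1 : ((Nat.choose (k * n - 1) (n - 1) : ℕ) : R) * (∏ j ∈ S, (j : R))
        = ((Nat.choose (k * p ^ (i - 1) - 1) (p ^ (i - 1) - 1) : ℕ) : R) *
            (∏ j ∈ S, (j : R)) := by
      rw [hcast, hA, hP1, mul_one, mul_comm]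
    calc ((Nat.choose (k * n - 1) (n - 1) : ℕ) : R)
        = ((Nat.choose (k * n - 1) (n - 1) : ℕ) : R) *
            ((∏ j ∈ S, (j : R)) * (∏ j ∈ S, ((j : R))⁻¹)) := by rw [hBinv, mul_one]
      _ = (((Nat.choose (k * n - 1) (n - 1) : ℕ) : R) * (∏ j ∈ S, (j : R))) *
            (∏ j ∈ S, ((j : R))⁻¹) := by ring
      _ = (((Nat.choose (k * p ^ (i - 1) - 1) (p ^ (i - 1) - 1) : ℕ) : R) *
            (∏ j ∈ S, (j : R))) * (∏ j ∈ S, ((j : R))⁻¹) := by rw [h1]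
      _ = ((Nat.choose (k * p ^ (i - 1) - 1) (p ^ (i - 1) - 1) : ℕ) : R) := by
          rw [mul_assoc, hBinv, mul_one]
  -- translate to ℤ divisibility
  have hz : (((Nat.choose (k * n - 1) (n - 1) : ℤ) -
      (Nat.choose (k * p ^ (i - 1) - 1) (p ^ (i - 1) - 1) : ℤ) : ℤ) : R) = 0 := by
    push_cast
    rw [hfin]
    ring
  have := (ZMod.intCast_zmod_eq_zero_iff_dvd _ (p ^ (3 * i))).mp hz
  rw [Nat.cast_pow] at this
  exact this
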